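/- For regular families ℱ and 𝒢 of finite subsets of ℕ, the following are equivalent: (a) there exists an infinite M ⊆ ℕ such that ℱ(M) ⊆ 𝒢; (b) there exists an infinite M ⊆ ℕ such that ℱ ⊆ 𝒢(M⁻¹); (c) CB(ℱ) ≤ CB(𝒢). -/

import Mathlib

/-- Identify a finite subset of `ℕ` with a point of the Cantor space `ℕ → Bool`. -/
def toCantor (F : Finset ℕ) : ℕ → Bool := fun n => decide (n ∈ F)

/-- Hereditary: closed under subsets. -/
def Hereditary (G : Set (Finset ℕ)) : Prop := ∀ ⦃E F : Finset ℕ⦄, E ⊆ F → F ∈ G → E ∈ G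

/-- Spreading: closed under replacing elements by larger ones, keeping the
increasing order and the cardinality. -/
def Spreading (G : Set (Finset ℕ)) : Prop :=
  ∀ (E : Finset ℕ) (f : ℕ → ℕ), StrictMonoOn f ↑E → (∀ n ∈ E, n ≤ f n) →
    E ∈ G → E.image f ∈ G

/-- Regular: compact (in the Cantor topology), hereditary and spreading. -/
def IsRegularFam (G : Set (Finset ℕ)) : Prop :=
  IsCompact (toCantor '' G) ∧ Hereditary G ∧ Spreading G

/-- The Cantor–Bendixson derivative. -/
def cbDeriv {α : Type*} [TopologicalSpace α] (K : Set α) : Set α :=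
  {x | x ∈ K ∧ x ∈ closure (K \ {x})}

/-- Transfinite Cantor–Bendixson iterates. -/
noncomputable def cbIter {α : Type*} [TopologicalSpace α] (K : Set α) (ξ : Ordinal) : Set α :=
  Ordinal.limitRecOn ξ K (fun _ S => cbDeriv S)
    (fun o _ ih => ⋂ (ζ : Ordinal) (h : ζ < o), ih ζ h)


/-- For an infinite `M ⊆ ℕ` with increasing enumeration `(mₙ)`, the family
`ℱ(M) = {(mₙ)_{n ∈ E} : E ∈ ℱ}`. -/
def famImg (F : Set (Finset ℕ)) (M : Set ℕ) : Set (Finset ℕ) :=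
  (fun E : Finset ℕ => E.image (Nat.nth (· ∈ M))) '' F

/-- The family `𝒢(M⁻¹) = {E : (mₙ)_{n ∈ E} ∈ 𝒢}`. -/
def famPre (G : Set (Finset ℕ)) (M : Set ℕ) : Set (Finset ℕ) :=
  {E : Finset ℕ | E.image (Nat.nth (· ∈ M)) ∈ G}

/-!
Identify finite sets with points of the Cantor space. For a hereditary spreading family the
Cantor–Bendixson derivative is combinatorial: `E` survives iff `insert n E` is in the family for
some `n > max E`. Hence a strictly increasing `m` with `m(ℱ) ⊆ 𝒢` maps the `ξ`-th derived family
of `ℱ` into that of `𝒢`, which gives (b) ⇒ (c). Conversely, compactness makes one-point end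
extension inside `ℱ` well founded, and if `ρ` is its rank then `E` lies in the `ρ(E)`-th derived
family of `ℱ`. When the derived families of `𝒢` vanish no earlier than those of `ℱ`, choosing
`m n` recursively, large enough for the finitely many `E ⊆ {0, …, n - 1}`, keeps `m(E)` in the
`ρ(E)`-th derived family of `𝒢`. The equivalence (a) ⇔ (b) is a reformulation.
-/

universe u

open Filter Topology Set

section CantorBendixson

variable {α : Type*} [TopologicalSpace α] (K : Set α)

@[simp] theorem cbIter_zero : cbIter K 0 = K :=
  Ordinal.limitRecOn_zero ..

@[simp] theorem cbIter_add_one (ξ : Ordinal) : cbIter K (ξ + 1) = cbDeriv (cbIter K ξ) :=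
  Ordinal.limitRecOn_add_one ..

theorem cbIter_limit {ξ : Ordinal} (h : Order.IsSuccLimit ξ) :
    cbIter K ξ = ⋂ ζ < ξ, cbIter K ζ :=
  Ordinal.limitRecOn_limit _ _ _ _ h

theorem cbDeriv_subset : cbDeriv K ⊆ K := fun _ hx => hx.1

theorem cbIter_anti : Antitone (cbIter K) := by
  intro ζ ξ
  induction ξ using Ordinal.limitRecOn with
  | zero => intro h; rw [nonpos_iff_eq_zero.mp h]
  | add_one ξ ih =>
    rw [← Order.succ_eq_add_one, Order.le_succ_iff_eq_or_le]
    rintro (rfl | h)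
    · exact le_rfl
    · rw [Order.succ_eq_add_one, cbIter_add_one]
      exact (cbDeriv_subset _).trans (ih h)
  | limit ξ hξ _ =>
    rintro h
    rcases h.eq_or_lt with rfl | h
    · exact le_rfl
    · exact (cbIter_limit K hξ).le.trans (biInter_subset_of_mem h)

theorem cbIter_subset (ξ : Ordinal) : cbIter K ξ ⊆ K := by
  simpa using cbIter_anti K (zero_le : 0 ≤ ξ)

end CantorBendixson

theorem toCantor_injective : Function.Injective toCantor := fun E E' h =>
  Finset.ext fun k => by simpa [toCantor] using congrFun h k

/-- The combinatorial derivative of a family. -/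
def derFam (S : Set (Finset ℕ)) : Set (Finset ℕ) :=
  {E | ∃ n, (∀ k ∈ E, k < n) ∧ insert n E ∈ S}

theorem Spreading.insert_image_mem {S : Set (Finset ℕ)} (hS : Spreading S) {E : Finset ℕ}
    {f : ℕ → ℕ} {n N : ℕ} (hf : StrictMonoOn f E) (hle : ∀ k ∈ E, k ≤ f k)
    (hn : ∀ k ∈ E, k < n) (hN : ∀ k ∈ E, f k < N) (hnN : n ≤ N) (h : insert n E ∈ S) :
    insert N (E.image f) ∈ S := by
  set g := Function.update f n N
  have hgn : g n = N := Function.update_self ..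
  have hg : ∀ k ∈ E, g k = f k := fun k hk => Function.update_of_ne (hn k hk).ne _ _
  have himage : (insert n E).image g = insert N (E.image f) := by
    rw [Finset.image_insert, hgn, Finset.image_congr hg]
  have hmono : StrictMonoOn g ↑(insert n E) := by
    rintro a ha b hb hab
    simp only [Finset.coe_insert, mem_insert_iff, Finset.mem_coe] at ha hb
    rcases ha with rfl | ha <;> rcases hb with rfl | hb
    · exact absurd hab (lt_irrefl _)
    · exact absurd (hn b hb) hab.not_gt
    · rw [hg a ha, hgn]; exact hN a ha
    · rw [hg a ha, hg b hb]; exact hf ha hb hab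
  have hgle : ∀ k ∈ insert n E, k ≤ g k := by
    intro k hk
    rcases Finset.mem_insert.mp hk with rfl | hk
    · rwa [hgn]
    · rw [hg k hk]; exact hle k hk
  exact himage ▸ hS _ g hmono hgle h

theorem Spreading.insert_mem_of_le {S : Set (Finset ℕ)} (hS : Spreading S) {E : Finset ℕ}
    {n N : ℕ} (hn : ∀ k ∈ E, k < n) (hnN : n ≤ N) (h : insert n E ∈ S) : insert N E ∈ S := by
  simpa using hS.insert_image_mem strictMonoOn_id (fun _ _ => le_rfl) hn
    (fun k hk => (hn k hk).trans_le hnN) hnN h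

theorem Hereditary.derFam {S : Set (Finset ℕ)} (hS : Hereditary S) : Hereditary (derFam S) :=
  fun _ _ hEF ⟨n, hn, h⟩ =>
    ⟨n, fun k hk => hn k (hEF hk), hS (Finset.insert_subset_insert n hEF) h⟩

theorem Spreading.derFam {S : Set (Finset ℕ)} (hS : Spreading S) : Spreading (derFam S) := by
  rintro E f hf hle ⟨n, hn, h⟩
  set N := max n ((E.image f).sup id + 1)
  have hN : ∀ k ∈ E.image f, k < N := fun k hk =>
    (Nat.lt_succ_of_le (Finset.le_sup (f := id) hk)).trans_le (le_max_right _ _)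
  exact ⟨N, hN, hS.insert_image_mem hf hle hn (fun k hk => hN _ (Finset.mem_image_of_mem f hk))
    (le_max_left _ _) h⟩

theorem derFam_mapsTo {S T : Set (Finset ℕ)} {m : ℕ → ℕ} (hm : StrictMono m)
    (h : MapsTo (Finset.image m) S T) : MapsTo (Finset.image m) (derFam S) (derFam T) := by
  rintro E ⟨n, hn, hnE⟩
  refine ⟨m n, ?_, Finset.image_insert m n E ▸ h hnE⟩
  simp only [Finset.mem_image, forall_exists_index, and_imp]
  rintro _ k hk rfl
  exact hm (hn k hk)

theorem toCantor_mem_cbDeriv_iff {S : Set (Finset ℕ)} (hh : Hereditary S) (hs : Spreading S)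
    {E : Finset ℕ} : toCantor E ∈ cbDeriv (toCantor '' S) ↔ E ∈ derFam S := by
  constructor
  · rintro ⟨-, hcl⟩
    set N := E.sup id + 1
    have hEN : ∀ k ∈ E, k < N := fun k hk => Nat.lt_succ_of_le (Finset.le_sup (f := id) hk)
    have hU : IsOpen ((Iio N).pi fun k => {toCantor E k}) :=
      isOpen_set_pi (finite_Iio N) fun _ _ => isOpen_discrete _
    obtain ⟨_, hy, ⟨E', hE', rfl⟩, hne⟩ := mem_closure_iff.mp hcl _ hU fun k _ => rfl
    have hagree : ∀ k < N, (k ∈ E' ↔ k ∈ E) := fun k hk => by simpa [toCantor] using hy k hk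
    have hsub : E ⊆ E' := fun k hk => (hagree k (hEN k hk)).2 hk
    obtain ⟨n, hnE', hnE⟩ := Finset.exists_of_ssubset (hsub.ssubset_of_ne fun h => hne (h ▸ rfl))
    have hNn : N ≤ n := not_lt.mp fun h => hnE ((hagree n h).1 hnE')
    exact ⟨n, fun k hk => (hEN k hk).trans_le hNn, hh (Finset.insert_subset hnE' hsub) hE'⟩
  · rintro ⟨n, hn, h⟩
    refine ⟨⟨E, hh (Finset.subset_insert n E) h, rfl⟩,
      mem_closure_of_tendsto (f := fun j => toCantor (insert (n + j) E)) (b := atTop) ?_ ?_⟩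
    · refine tendsto_pi_nhds.2 fun k => tendsto_nhds_of_eventually_eq ?_
      filter_upwards [eventually_gt_atTop k] with j hj
      simp [toCantor, show k ≠ n + j by omega]
    · refine Eventually.of_forall fun j =>
        ⟨⟨_, hs.insert_mem_of_le hn (Nat.le_add_right n j) h, rfl⟩, fun heq => ?_⟩
      have hnj : n + j ∈ E := toCantor_injective heq ▸ Finset.mem_insert_self _ _
      exact (hn _ hnj).not_ge (Nat.le_add_right n j)

def derivedFam (H : Set (Finset ℕ)) (ξ : Ordinal) : Set (Finset ℕ) :=
  toCantor ⁻¹' cbIter (toCantor '' H) ξ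

section DerivedFam

variable (H : Set (Finset ℕ))

@[simp] theorem derivedFam_zero : derivedFam H 0 = H := by
  simp [derivedFam, toCantor_injective.preimage_image]

theorem derivedFam_anti : Antitone (derivedFam H) := fun _ _ h => preimage_mono (cbIter_anti _ h)

theorem derivedFam_limit {ξ : Ordinal} (h : Order.IsSuccLimit ξ) :
    derivedFam H ξ = ⋂ ζ < ξ, derivedFam H ζ := by
  simp only [derivedFam, cbIter_limit _ h, preimage_iInter₂]

theorem image_derivedFam (ξ : Ordinal) : toCantor '' derivedFam H ξ = cbIter (toCantor '' H) ξ :=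
  image_preimage_eq_of_subset ((cbIter_subset _ ξ).trans (image_subset_range _ _))

theorem derivedFam_eq_empty_iff {ξ : Ordinal} :
    derivedFam H ξ = ∅ ↔ cbIter (toCantor '' H) ξ = ∅ := by
  rw [← image_derivedFam, image_eq_empty]

variable {H}

theorem derivedFam_add_one_of_hereditary_of_spreading {ξ : Ordinal}
    (hh : Hereditary (derivedFam H ξ)) (hs : Spreading (derivedFam H ξ)) :
    derivedFam H (ξ + 1) = derFam (derivedFam H ξ) := by
  ext E
  rw [derivedFam, mem_preimage, cbIter_add_one, ← image_derivedFam]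
  exact toCantor_mem_cbDeriv_iff hh hs

theorem hereditary_derivedFam_and_spreading (hh : Hereditary H) (hs : Spreading H)
    (ξ : Ordinal) : Hereditary (derivedFam H ξ) ∧ Spreading (derivedFam H ξ) := by
  induction ξ using Ordinal.limitRecOn with
  | zero => rw [derivedFam_zero]; exact ⟨hh, hs⟩
  | add_one ξ ih =>
    rw [derivedFam_add_one_of_hereditary_of_spreading ih.1 ih.2]
    exact ⟨ih.1.derFam, ih.2.derFam⟩
  | limit ξ hξ ih =>
    rw [derivedFam_limit H hξ]
    refine ⟨fun E E' hEE' h => ?_, fun E f hf hle h => ?_⟩ <;>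
      simp only [mem_iInter₂] at h ⊢
    · exact fun ζ hζ => (ih ζ hζ).1 hEE' (h ζ hζ)
    · exact fun ζ hζ => (ih ζ hζ).2 E f hf hle (h ζ hζ)

theorem derivedFam_add_one (hh : Hereditary H) (hs : Spreading H) (ξ : Ordinal) :
    derivedFam H (ξ + 1) = derFam (derivedFam H ξ) :=
  derivedFam_add_one_of_hereditary_of_spreading (hereditary_derivedFam_and_spreading hh hs ξ).1
    (hereditary_derivedFam_and_spreading hh hs ξ).2

theorem eventually_insert_mem_derivedFam (hh : Hereditary H) (hs : Spreading H) {ξ : Ordinal}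
    {A : Finset ℕ} (hA : A ∈ derivedFam H (ξ + 1)) :
    ∀ᶠ N in atTop, insert N A ∈ derivedFam H ξ := by
  rw [derivedFam_add_one hh hs] at hA
  obtain ⟨n, hn, h⟩ := hA
  filter_upwards [eventually_ge_atTop n] with N hN
  exact (hereditary_derivedFam_and_spreading hh hs ξ).2.insert_mem_of_le hn hN h

end DerivedFam

theorem mapsTo_image_derivedFam {F G : Set (Finset ℕ)} (hFh : Hereditary F) (hFs : Spreading F)
    (hGh : Hereditary G) (hGs : Spreading G) {m : ℕ → ℕ} (hm : StrictMono m)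
    (h : MapsTo (Finset.image m) F G) (ξ : Ordinal) :
    MapsTo (Finset.image m) (derivedFam F ξ) (derivedFam G ξ) := by
  induction ξ using Ordinal.limitRecOn with
  | zero => simpa using h
  | add_one ξ ih =>
    rw [derivedFam_add_one hFh hFs, derivedFam_add_one hGh hGs]
    exact derFam_mapsTo hm ih
  | limit ξ hξ ih =>
    rw [derivedFam_limit F hξ, derivedFam_limit G hξ]
    exact fun E hE => mem_iInter₂.2 fun ζ hζ => ih ζ hζ (mem_iInter₂.1 hE ζ hζ)

def EndExt (H : Set (Finset ℕ)) (A B : Finset ℕ) : Prop :=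
  A ∈ H ∧ ∃ n, (∀ k ∈ B, k < n) ∧ A = insert n B

theorem wellFounded_endExt {H : Set (Finset ℕ)} (hH : IsClosed (toCantor '' H)) :
    WellFounded (EndExt H) := by
  classical
  refine wellFounded_iff_isEmpty_descending_chain.2 ⟨fun ⟨a, ha⟩ => ?_⟩
  have hssub : ∀ n, a n ⊂ a (n + 1) := fun n => by
    obtain ⟨-, k, hk, h⟩ := ha n
    exact h ▸ Finset.ssubset_insert fun hk' => lt_irrefl k (hk k hk')
  have hmono : Monotone a := monotone_nat_of_le_succ fun n => (hssub n).subset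
  -- the chain converges to the indicator of its union, which is therefore a finite set
  have htend :
      Tendsto (fun n => toCantor (a (n + 1))) atTop (𝓝 fun k => decide (∃ n, k ∈ a n)) := by
    refine tendsto_pi_nhds.2 fun k => tendsto_nhds_of_eventually_eq ?_
    by_cases hk : ∃ n, k ∈ a n
    · obtain ⟨n, hn⟩ := hk
      filter_upwards [eventually_ge_atTop n] with j hj
      simpa [toCantor, hmono (hj.trans j.le_succ) hn] using ⟨n, hn⟩
    · exact Eventually.of_forall fun j => by simp [toCantor, not_exists.1 hk]
  obtain ⟨E, -, hE⟩ := hH.mem_of_tendsto htend (Eventually.of_forall fun n => ⟨_, (ha n).1, rfl⟩)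
  have hsub : ∀ n, a n ⊆ E := fun n k hk => by
    have hk' := congrFun hE k
    simp only [toCantor, decide_eq_decide] at hk'
    exact hk'.2 ⟨n, hk⟩
  have hcard : StrictMono fun n => (a n).card :=
    strictMono_nat_of_lt_succ fun n => Finset.card_lt_card (hssub n)
  exact (hcard.le_apply.trans (Finset.card_le_card (hsub (E.card + 1)))).not_gt E.card.lt_succ_self

theorem mem_derivedFam_of_le_rank {H : Set (Finset ℕ)} (hh : Hereditary H) (hs : Spreading H)
    [IsWellFounded (Finset ℕ) (EndExt H)] {ξ : Ordinal.{u}} :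
    ∀ {E}, E ∈ H → ξ ≤ Ordinal.lift.{u} (IsWellFounded.rank (EndExt H) E) → E ∈ derivedFam H ξ := by
  induction ξ using Ordinal.limitRecOn with
  | zero => intro E hE _; rwa [derivedFam_zero]
  | add_one ξ ih =>
    intro E _ hξ
    obtain ⟨ξ', hξ', rfl⟩ := Ordinal.lt_lift_iff.1 (Order.add_one_le_iff.1 hξ)
    rw [IsWellFounded.rank_eq, Ordinal.lt_iSup_iff] at hξ'
    obtain ⟨⟨_, hAH, n, hn, rfl⟩, hA⟩ := hξ'
    rw [derivedFam_add_one hh hs]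
    exact ⟨n, hn, ih hAH (Ordinal.lift_le.2 (Order.lt_succ_iff.1 hA))⟩
  | limit ξ hξ ih =>
    intro E hE hle
    rw [derivedFam_limit H hξ, mem_iInter₂]
    exact fun ζ hζ => ih ζ hζ hE (hζ.le.trans hle)

theorem exists_seq_of_exists_next {α : Type*} [Nonempty α] {P : (ℕ → α) → ℕ → α → Prop}
    (hP : ∀ m n, ∃ a, P m n a)
    (hloc : ∀ m m' n a, (∀ k < n, m k = m' k) → P m n a → P m' n a) :
    ∃ m : ℕ → α, ∀ n, P m n (m n) := by
  choose next hnext using hP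
  let m : ℕ → α := Nat.strongRec fun n ih =>
    next (fun k => if h : k < n then ih k h else Classical.arbitrary α) n
  refine ⟨m, fun n => ?_⟩
  have hm : m n = next (fun k => if k < n then m k else Classical.arbitrary α) n :=
    Nat.strongRec_eq _ n
  rw [hm]
  exact hloc _ _ n _ (fun k hk => if_pos hk) (hnext _ n)

theorem exists_strictMono_insert_image_mem {G : Set (Finset ℕ)} (hGh : Hereditary G)
    (hGs : Spreading G) (ρ : Finset ℕ → Ordinal) :
    ∃ m : ℕ → ℕ, StrictMono m ∧ ∀ n E, (∀ k ∈ E, k < n) →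
      E.image m ∈ derivedFam G (ρ (insert n E) + 1) →
        (insert n E).image m ∈ derivedFam G (ρ (insert n E)) := by
  classical
  let P : (ℕ → ℕ) → ℕ → ℕ → Prop := fun m n N =>
    (∀ k ∈ Finset.range n, m k < N) ∧ ∀ E ∈ (Finset.range n).powerset,
      E.image m ∈ derivedFam G (ρ (insert n E) + 1) →
        insert N (E.image m) ∈ derivedFam G (ρ (insert n E))
  obtain ⟨m, hm⟩ : ∃ m : ℕ → ℕ, ∀ n, P m n (m n) := by
    refine exists_seq_of_exists_next (fun m n => ?_) (fun m m' n N h hP => ?_)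
    · refine (((eventually_all_finset _).2 fun k _ => eventually_gt_atTop (m k)).and
        ((eventually_all_finset _).2 fun E _ => ?_)).exists
      exact eventually_imp_distrib_left.2 (eventually_insert_mem_derivedFam hGh hGs)
    · have himage : ∀ E ∈ (Finset.range n).powerset, E.image m = E.image m' := fun E hE =>
        Finset.image_congr fun k hk => h k (Finset.mem_range.1 (Finset.mem_powerset.1 hE hk))
      refine ⟨fun k hk => h k (Finset.mem_range.1 hk) ▸ hP.1 k hk, fun E hE => ?_⟩
      rw [← himage E hE]
      exact hP.2 E hE
  refine ⟨m, strictMono_nat_of_lt_succ fun n => (hm (n + 1)).1 n (Finset.self_mem_range_succ n),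
    fun n E hn hE => ?_⟩
  rw [Finset.image_insert]
  exact (hm n).2 E (Finset.mem_powerset.2 fun k hk => Finset.mem_range.2 (hn k hk)) hE

theorem exists_strictMono_mapsTo_image {F G : Set (Finset ℕ)} (hFh : Hereditary F)
    (hFs : Spreading F) (hGh : Hereditary G) (hGs : Spreading G)
    [IsWellFounded (Finset ℕ) (EndExt F)]
    (hFG : ∀ ξ : Ordinal.{u}, derivedFam G ξ = ∅ → derivedFam F ξ = ∅) :
    ∃ m : ℕ → ℕ, StrictMono m ∧ MapsTo (Finset.image m) F G := by
  let ρ : Finset ℕ → Ordinal.{u} := fun E => Ordinal.lift.{u} (IsWellFounded.rank (EndExt F) E)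
  obtain ⟨m, hm, hstep⟩ := exists_strictMono_insert_image_mem hGh hGs ρ
  have hbase : ∅ ∈ F → ∅ ∈ derivedFam G (ρ ∅) := fun h => by
    have hF : (derivedFam F (ρ ∅)).Nonempty := ⟨∅, mem_derivedFam_of_le_rank hFh hFs h le_rfl⟩
    obtain ⟨A, hA⟩ := nonempty_iff_ne_empty.2 fun hG => hF.ne_empty (hFG _ hG)
    exact (hereditary_derivedFam_and_spreading hGh hGs _).1 (Finset.empty_subset A) hA
  have hinv : ∀ E ∈ F, E.image m ∈ derivedFam G (ρ E) := by
    intro E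
    induction E using Finset.induction_on_max with
    | empty => simpa using hbase
    | insert n E hn ih =>
      intro hE
      have hlt : ρ (insert n E) < ρ E :=
        Ordinal.lift_lt.2 (IsWellFounded.rank_lt_of_rel ⟨hE, n, hn, rfl⟩)
      exact hstep n E hn
        (derivedFam_anti G (Order.add_one_le_of_lt hlt) (ih (hFh (Finset.subset_insert n E) hE)))
  exact ⟨m, hm, fun E hE => by simpa using derivedFam_anti G (zero_le (a := ρ E)) (hinv E hE)⟩

theorem nth_mem_range_of_strictMono {f : ℕ → ℕ} (hf : StrictMono f) :
    Nat.nth (· ∈ range f) = f := by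
  have hinf : (range f).Infinite := infinite_range_of_injective hf.injective
  have hall : ∀ n, n ∈ {n | ∀ h : (Set.ofPred (· ∈ range f)).Finite, n < h.toFinset.card} :=
    fun _ h => absurd h hinf
  refine funext fun n => (Nat.eq_nth_of_strictMonoOn_of_mapsTo_of_surjOn f ?_ ?_
    (hf.strictMonoOn _) (hall n)).symm
  · rintro _ ⟨k, rfl⟩
    exact ⟨k, hall k, rfl⟩
  · exact fun k _ => ⟨k, rfl⟩

/-- For regular families `ℱ, 𝒢`, the following are equivalent:
(a) `ℱ(M) ⊆ 𝒢` for some infinite `M`; (b) `ℱ ⊆ 𝒢(M⁻¹)` for some infinite `M`;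
(c) `CB(ℱ) ≤ CB(𝒢)`. -/
theorem famImg_subset_iff_CB_le (F G : Set (Finset ℕ))
    (hF : IsRegularFam F) (hG : IsRegularFam G) :
    ((∃ M : Set ℕ, M.Infinite ∧ famImg F M ⊆ G) ↔
        (∃ M : Set ℕ, M.Infinite ∧ F ⊆ famPre G M)) ∧
    ((∃ M : Set ℕ, M.Infinite ∧ F ⊆ famPre G M) ↔
        (∀ ξ : Ordinal, cbIter (toCantor '' G) ξ = ∅ → cbIter (toCantor '' F) ξ = ∅)) := by
  obtain ⟨hFc, hFh, hFs⟩ := hF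
  obtain ⟨-, hGh, hGs⟩ := hG
  refine ⟨exists_congr fun M => and_congr_right fun _ => image_subset_iff, ?_⟩
  simp only [← derivedFam_eq_empty_iff]
  constructor
  · rintro ⟨M, hM, hFG⟩ ξ hG
    have := mapsTo_image_derivedFam hFh hFs hGh hGs (Nat.nth_strictMono hM) hFG ξ
    exact eq_empty_of_forall_notMem fun E hE => by simpa [hG] using this hE
  · intro h
    have : IsWellFounded (Finset ℕ) (EndExt F) := ⟨wellFounded_endExt hFc.isClosed⟩
    obtain ⟨m, hm, hFG⟩ := exists_strictMono_mapsTo_image hFh hFs hGh hGs h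
    refine ⟨range m, infinite_range_of_injective hm.injective, fun E hE => ?_⟩
    simpa only [famPre, mem_ofPred_eq, nth_mem_range_of_strictMono hm] using hFG hE
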